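/- Let K ⊆ K' be an extension of fields, each complete with respect to a nontrivial non-archimedean absolute value whose valuation ring is a discrete valuation ring, such that the absolute value of K' restricts on K to the absolute value of K. Let R and R' denote the respective valuation rings. Let φ ∈ K⟦X⟧ be a formal power series with zero constant term. Then the supremum of the radii r ∈ (0,1] at which the graph of φ is analytically trivialized over K (with trivializing series in K⟦X₁,X₂⟧ and Jacobian condition relative to R) equals the supremum of the radii r ∈ (0,1] at which the graph of φ, viewed in K'⟦X⟧, is analytically trivialized over K' (with trivializing series in K'⟦X₁,X₂⟧ and Jacobian condition relative to R'). (This is the graph case of Proposition 3.4: the size is invariant under isometric extensions of complete discretely valued fields.) -/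

import Mathlib

noncomputable section

open Filter PowerSeries

namespace NA

/-- The valuation ring `R = {x : K | ‖x‖ ≤ 1}` of a nonarchimedean normed field. -/
def integers (K : Type*) [NormedField K] [IsUltrametricDist K] : Subring K where
  carrier := {x : K | ‖x‖ ≤ 1}
  mul_mem' {a b} ha hb := by
    simp only [Set.mem_setOf_eq, norm_mul] at *
    calc ‖a‖ * ‖b‖ ≤ 1 * 1 := mul_le_mul ha hb (norm_nonneg _) zero_le_one
    _ = 1 := one_mul 1
  one_mem' := by simp
  add_mem' {a b} ha hb := (IsUltrametricDist.norm_add_le_max a b).trans (max_le ha hb)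
  zero_mem' := by simp
  neg_mem' {a} ha := by simpa using ha

/-- Composition `φ ∘ ψ` of formal power series in one variable
(this gives `φ(ψ)` whenever `ψ` has zero constant term). -/
def comp {K : Type*} [CommSemiring K] (φ ψ : PowerSeries K) : PowerSeries K :=
  PowerSeries.mk fun n =>
    ∑ k ∈ Finset.range (n + 1), PowerSeries.coeff k φ * PowerSeries.coeff n (ψ ^ k)

/-- The one-variable series `T ↦ f(T, 0)` obtained from a two-variable series `f`. -/
def line1 {K : Type*} [CommSemiring K] (f : MvPowerSeries (Fin 2) K) : PowerSeries K :=
  PowerSeries.mk fun n => MvPowerSeries.coeff (Finsupp.single (0 : Fin 2) n) f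

/-- The statement `‖f‖_r ≤ c`, where `‖f‖_r = sup_I ‖a_I‖ r^{|I|}` is the Gauss norm of the
multivariate formal power series `f = Σ_I a_I X^I`. -/
def NormLE {K : Type*} [NormedField K] {N : ℕ} (r : ℝ) (f : MvPowerSeries (Fin N) K)
    (c : ℝ) : Prop :=
  ∀ I : Fin N →₀ ℕ, ‖MvPowerSeries.coeff I f‖ * r ^ (∑ j, I j) ≤ c

/-- The graph of `φ` is analytically trivialized at radius `r`: there is a pair
`f = (f₁, f₂)` of two-variable power series, vanishing at the origin, with `‖f_j‖_r ≤ r`,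
whose Jacobian matrix at the origin lies in `GL₂(R)` (entries of norm `≤ 1`, determinant of
norm `1`), and such that `f₂(T,0) = φ(f₁(T,0))`. -/
def GraphTrivAt {K : Type*} [NormedField K] (φ : PowerSeries K) (r : ℝ) : Prop :=
  ∃ f₁ f₂ : MvPowerSeries (Fin 2) K,
    MvPowerSeries.constantCoeff f₁ = 0 ∧
    MvPowerSeries.constantCoeff f₂ = 0 ∧
    NormLE r f₁ r ∧ NormLE r f₂ r ∧
    ‖MvPowerSeries.coeff (Finsupp.single (0 : Fin 2) 1) f₁‖ ≤ 1 ∧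
    ‖MvPowerSeries.coeff (Finsupp.single (1 : Fin 2) 1) f₁‖ ≤ 1 ∧
    ‖MvPowerSeries.coeff (Finsupp.single (0 : Fin 2) 1) f₂‖ ≤ 1 ∧
    ‖MvPowerSeries.coeff (Finsupp.single (1 : Fin 2) 1) f₂‖ ≤ 1 ∧
    ‖MvPowerSeries.coeff (Finsupp.single (0 : Fin 2) 1) f₁ *
        MvPowerSeries.coeff (Finsupp.single (1 : Fin 2) 1) f₂ -
      MvPowerSeries.coeff (Finsupp.single (1 : Fin 2) 1) f₁ *
        MvPowerSeries.coeff (Finsupp.single (0 : Fin 2) 1) f₂‖ = 1 ∧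
    line1 f₂ = comp φ (line1 f₁)

end NA

/-!
A trivialization at radius `r` amounts to a parametrization `T ↦ (u(T), φ(u(T)))` of the graph by
series bounded by `r` on the disc of radius `r`, with unimodular tangent vector (`GraphParamAt`):
the second variable can always be added linearly. This condition only involves coefficients of
`u` and `φ ∘ u`. A parametrization `u'` over `K'` descends to `K`: if `u'` has unit tangent, the
bound on `φ ∘ u'` bounds `φ` itself and `u = X` works; otherwise `φ` has unit linear coefficient,
the same argument applied to `ψ ∘ (φ ∘ u') = u'` bounds the compositional inverse `ψ` of `φ`, and
`u = ψ` works.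
-/

namespace NA

open Finset PowerSeries

section Comp

variable {K : Type*} [CommRing K]

lemma coeff_comp (φ ψ : K⟦X⟧) (n : ℕ) :
    coeff n (comp φ ψ) = ∑ k ∈ range (n + 1), coeff k φ * coeff n (ψ ^ k) :=
  coeff_mk _ _

lemma coeff_pow_of_lt {ψ : K⟦X⟧} (hψ : constantCoeff ψ = 0) {k n : ℕ} (h : n < k) :
    coeff n (ψ ^ k) = 0 :=
  coeff_of_lt_order _ ((Nat.cast_lt.2 h).trans_le (le_order_pow_of_constantCoeff_eq_zero k hψ))

lemma coeff_pow_self {ψ : K⟦X⟧} (hψ : constantCoeff ψ = 0) (n : ℕ) :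
    coeff n (ψ ^ n) = coeff 1 ψ ^ n := by
  obtain ⟨χ, rfl⟩ := X_dvd_iff.2 hψ
  rw [mul_pow, coeff_X_pow_mul', if_pos le_rfl, Nat.sub_self, coeff_zero_eq_constantCoeff,
    map_pow, coeff_succ_X_mul, coeff_zero_eq_constantCoeff]

lemma coeff_one_comp (φ ψ : K⟦X⟧) : coeff 1 (comp φ ψ) = coeff 1 φ * coeff 1 ψ := by
  simp [coeff_comp, sum_range_succ]

lemma comp_eq_subst (φ : K⟦X⟧) {ψ : K⟦X⟧} (hψ : constantCoeff ψ = 0) :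
    comp φ ψ = φ.subst ψ := by
  ext n
  rw [coeff_comp, coeff_subst' (.of_constantCoeff_zero' hψ),
    finsum_eq_sum_of_support_subset _ (s := range (n + 1))]
  · simp only [smul_eq_mul]
  · intro k hk
    by_contra h
    simp only [coe_range, Set.mem_Iio, not_lt] at h
    exact hk (by simp [coeff_pow_of_lt hψ (Nat.lt_of_succ_le h)])

lemma constantCoeff_map {L : Type*} [CommRing L] (ι : K →+* L) (φ : K⟦X⟧) :
    constantCoeff (map ι φ) = ι (constantCoeff φ) :=
  MvPowerSeries.constantCoeff_map ι φ

lemma map_comp {L : Type*} [CommRing L] (ι : K →+* L) (φ ψ : K⟦X⟧) :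
    map ι (comp φ ψ) = comp (map ι φ) (map ι ψ) := by
  ext n
  simp only [coeff_map, coeff_comp, map_sum, map_mul, ← map_pow]

end Comp

section NormLE₁

variable {K : Type*} [NormedField K]

/-- One-variable analogue of `NormLE`: `‖f‖_r ≤ c`. -/
def NormLE₁ (r : ℝ) (f : K⟦X⟧) (c : ℝ) : Prop :=
  ∀ n, ‖coeff n f‖ * r ^ n ≤ c

variable {r a b c : ℝ} {f g u : K⟦X⟧}

lemma NormLE₁.nonneg (h : NormLE₁ r f c) : 0 ≤ c :=
  (norm_nonneg _).trans (by simpa using h 0)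

lemma NormLE₁.norm_coeff_one_le (hr : 0 < r) (h : NormLE₁ r f r) : ‖coeff 1 f‖ ≤ 1 :=
  le_of_mul_le_mul_right (by simpa using h 1) hr

lemma normLE₁_one (r : ℝ) : NormLE₁ r (1 : K⟦X⟧) 1 := by
  intro n
  rw [coeff_one]
  split_ifs with h <;> simp [h]

lemma normLE₁_X (hr : 0 ≤ r) : NormLE₁ r (X : K⟦X⟧) r := by
  intro n
  rw [coeff_X]
  split_ifs with h <;> simp [h, hr]

lemma normLE₁_map_iff {K' : Type*} [NormedField K'] (ι : K →+* K') (hι : ∀ x, ‖ι x‖ = ‖x‖) :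
    NormLE₁ r (map ι f) c ↔ NormLE₁ r f c := by
  simp only [NormLE₁, coeff_map, hι]

variable [IsUltrametricDist K]

lemma norm_sum_mul_le {ι : Type*} {s : Finset ι} {f : ι → K} {t c : ℝ} (ht : 0 < t)
    (hc : 0 ≤ c) (h : ∀ i ∈ s, ‖f i‖ * t ≤ c) : ‖∑ i ∈ s, f i‖ * t ≤ c := by
  rw [← le_div_iff₀ ht]
  exact IsUltrametricDist.norm_sum_le_of_forall_le_of_nonneg (by positivity)
    fun i hi => (le_div_iff₀ ht).2 (h i hi)

lemma norm_eq_one_or_norm_eq_one_of_norm_det {a b c d : K} (ha : ‖a‖ ≤ 1) (hb : ‖b‖ ≤ 1)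
    (hc : ‖c‖ ≤ 1) (hd : ‖d‖ ≤ 1) (hdet : ‖a * d - b * c‖ = 1) : ‖a‖ = 1 ∨ ‖c‖ = 1 := by
  by_contra! h
  have had : ‖a * d‖ < 1 := by
    rw [norm_mul]; exact mul_lt_one_of_nonneg_of_lt_one_left (norm_nonneg _) (ha.lt_of_ne h.1) hd
  have hbc : ‖b * c‖ < 1 := by
    rw [norm_mul]; exact mul_lt_one_of_nonneg_of_lt_one_right hb (norm_nonneg _) (hc.lt_of_ne h.2)
  have := IsUltrametricDist.norm_add_le_max (a * d) (-(b * c))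
  rw [norm_neg, ← sub_eq_add_neg, hdet] at this
  exact (this.trans_lt (max_lt had hbc)).false

lemma NormLE₁.mul (hr : 0 < r) (hf : NormLE₁ r f a) (hg : NormLE₁ r g b) :
    NormLE₁ r (f * g) (a * b) := by
  intro n
  rw [coeff_mul]
  refine norm_sum_mul_le (pow_pos hr n) (mul_nonneg hf.nonneg hg.nonneg) fun p hp => ?_
  rw [HasAntidiagonal.mem_antidiagonal] at hp
  calc ‖coeff p.1 f * coeff p.2 g‖ * r ^ n
      = (‖coeff p.1 f‖ * r ^ p.1) * (‖coeff p.2 g‖ * r ^ p.2) := by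
        rw [norm_mul, ← hp, pow_add]; ring
    _ ≤ a * b := mul_le_mul (hf _) (hg _) (by positivity) hf.nonneg

lemma NormLE₁.pow (hr : 0 < r) (hf : NormLE₁ r f c) (k : ℕ) : NormLE₁ r (f ^ k) (c ^ k) := by
  induction k with
  | zero => simpa using normLE₁_one r
  | succ k ih => rw [pow_succ, pow_succ]; exact ih.mul hr hf

/-- If `u` is tangent to a unit, the coefficient `g_n` is read off from `(g ∘ u)_n` and the
`g_k` with `k < n`, so the bound on `g ∘ u` propagates to `g` by strong induction. -/
lemma NormLE₁.of_comp (hr : 0 < r) (hu0 : constantCoeff u = 0) (hu1 : ‖coeff 1 u‖ = 1)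
    (hu : NormLE₁ r u r) (h : NormLE₁ r (comp g u) r) : NormLE₁ r g r := by
  intro n
  induction n using Nat.strong_induction_on with
  | _ n ih =>
  have hgn : coeff n g * coeff 1 u ^ n
      = coeff n (comp g u) - ∑ k ∈ range n, coeff k g * coeff n (u ^ k) := by
    rw [coeff_comp, sum_range_succ, coeff_pow_self hu0]; ring
  have hlower : ‖∑ k ∈ range n, coeff k g * coeff n (u ^ k)‖ * r ^ n ≤ r :=
    norm_sum_mul_le (pow_pos hr n) hr.le fun k hk => calc
      ‖coeff k g * coeff n (u ^ k)‖ * r ^ n = ‖coeff k g‖ * (‖coeff n (u ^ k)‖ * r ^ n) := by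
        rw [norm_mul, mul_assoc]
      _ ≤ ‖coeff k g‖ * r ^ k := mul_le_mul_of_nonneg_left (hu.pow hr k n) (norm_nonneg _)
      _ ≤ r := ih k (mem_range.1 hk)
  have hsub := IsUltrametricDist.norm_add_le_max (coeff n (comp g u))
    (-∑ k ∈ range n, coeff k g * coeff n (u ^ k))
  rw [norm_neg, ← sub_eq_add_neg, ← hgn, norm_mul, norm_pow, hu1, one_pow, mul_one] at hsub
  calc ‖coeff n g‖ * r ^ n
      ≤ max ‖coeff n (comp g u)‖ ‖∑ k ∈ range n, coeff k g * coeff n (u ^ k)‖ * r ^ n := by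
        gcongr
    _ ≤ r := by
        rw [max_mul_of_nonneg _ _ (by positivity)]
        exact max_le (h n) hlower

end NormLE₁

section GraphLift

variable {K : Type*} [NormedField K]

def graphLift (u : K⟦X⟧) (b : K) : MvPowerSeries (Fin 2) K :=
  u.subst (MvPowerSeries.X 0) + MvPowerSeries.monomial (Finsupp.single 1 1) b

variable (u : K⟦X⟧) (b : K)

lemma coeff_graphLift (I : Fin 2 →₀ ℕ) :
    MvPowerSeries.coeff I (graphLift u b) =
      (if I = Finsupp.single 0 (I 0) then coeff (I 0) u else 0) +
        if I = Finsupp.single 1 1 then b else 0 := by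
  simp [graphLift, coeff_subst_single, MvPowerSeries.coeff_monomial]

lemma coeff_graphLift_single_zero (n : ℕ) :
    MvPowerSeries.coeff (Finsupp.single 0 n) (graphLift u b) = coeff n u := by
  simp [coeff_graphLift, Finsupp.single_eq_single_iff]

lemma coeff_graphLift_single_one :
    MvPowerSeries.coeff (Finsupp.single 1 1) (graphLift u b) = b := by
  simp [coeff_graphLift]

lemma constantCoeff_graphLift :
    MvPowerSeries.constantCoeff (graphLift u b) = constantCoeff u := by
  rw [← MvPowerSeries.coeff_zero_eq_constantCoeff_apply, ← Finsupp.single_zero 0,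
    coeff_graphLift_single_zero, coeff_zero_eq_constantCoeff]

lemma line1_graphLift : line1 (graphLift u b) = u := by
  ext n
  simp [line1, coeff_graphLift_single_zero]

variable {u b} {r : ℝ}

lemma normLE_graphLift (hr : 0 ≤ r) (hu : NormLE₁ r u r) (hb : ‖b‖ ≤ 1) :
    NormLE r (graphLift u b) r := by
  intro I
  rw [coeff_graphLift]
  by_cases h0 : I = Finsupp.single 0 (I 0)
  · rw [h0]
    simpa [Finsupp.single_eq_single_iff] using hu (I 0)
  · by_cases h1 : I = Finsupp.single 1 1
    · subst h1
      simpa using mul_le_of_le_one_left hr hb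
    · simp [h0, h1, hr]

lemma NormLE.line1 {f : MvPowerSeries (Fin 2) K} {c : ℝ} (hf : NormLE r f c) :
    NormLE₁ r (line1 f) c := by
  intro n
  simpa [NA.line1] using hf (Finsupp.single 0 n)

end GraphLift

section GraphParam

variable {K : Type*} [NormedField K]

/-- `T ↦ (u(T), φ(u(T)))` parametrizes the graph of `φ` inside the polydisc of radius `r`, with
first-order term a unimodular vector of `R²`. -/
def GraphParamAt (φ : K⟦X⟧) (r : ℝ) : Prop :=
  ∃ u : K⟦X⟧, constantCoeff u = 0 ∧ NormLE₁ r u r ∧ NormLE₁ r (comp φ u) r ∧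
    (‖coeff 1 u‖ = 1 ∨ ‖coeff 1 (comp φ u)‖ = 1)

variable {φ : K⟦X⟧} {r : ℝ}

/-- The unimodular first-order term `(u₁, v₁)` is completed to a matrix of `GL₂(R)` by the second
column `(b, d) = (0, 1)` or `(1, 0)`. -/
lemma GraphParamAt.graphTrivAt (hφ0 : constantCoeff φ = 0) (hr : 0 < r)
    (h : GraphParamAt φ r) : GraphTrivAt φ r := by
  obtain ⟨u, hu0, hu, hv, hunit⟩ := h
  obtain ⟨b, d, hb, hd, hdet⟩ : ∃ b d : K, ‖b‖ ≤ 1 ∧ ‖d‖ ≤ 1 ∧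
      ‖coeff 1 u * d - b * coeff 1 (comp φ u)‖ = 1 := by
    rcases hunit with h | h
    · exact ⟨0, 1, by simp, by simp, by simpa using h⟩
    · exact ⟨1, 0, by simp, by simp, by simpa using h⟩
  refine ⟨graphLift u b, graphLift (comp φ u) d, ?_, ?_, normLE_graphLift hr.le hu hb,
    normLE_graphLift hr.le hv hd, ?_, ?_, ?_, ?_, ?_, ?_⟩ <;>
  simp only [constantCoeff_graphLift, coeff_graphLift_single_zero, coeff_graphLift_single_one,
    line1_graphLift]
  · exact hu0
  · rw [← coeff_zero_eq_constantCoeff_apply, coeff_comp]; simp [hφ0]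
  · exact hu.norm_coeff_one_le hr
  · exact hb
  · exact hv.norm_coeff_one_le hr
  · exact hd
  · exact hdet

variable [IsUltrametricDist K]

lemma GraphTrivAt.graphParamAt (h : GraphTrivAt φ r) : GraphParamAt φ r := by
  obtain ⟨f₁, f₂, hf₁0, -, hf₁, hf₂, ha, hb, hc, hd, hdet, hline⟩ := h
  refine ⟨line1 f₁, ?_, hf₁.line1, hline ▸ hf₂.line1, ?_⟩
  · simpa [line1, ← coeff_zero_eq_constantCoeff_apply] using hf₁0
  · rw [← hline]
    simpa [line1] using norm_eq_one_or_norm_eq_one_of_norm_det ha hb hc hd hdet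

lemma graphTrivAt_iff_graphParamAt (hφ0 : constantCoeff φ = 0) (hr : 0 < r) :
    GraphTrivAt φ r ↔ GraphParamAt φ r :=
  ⟨GraphTrivAt.graphParamAt, GraphParamAt.graphTrivAt hφ0 hr⟩

end GraphParam

section Transfer

variable {K K' : Type*} [NormedField K] [NormedField K']
  (ι : K →+* K') (hι : ∀ x, ‖ι x‖ = ‖x‖) {φ : K⟦X⟧} {r : ℝ}
include hι

lemma GraphParamAt.map (h : GraphParamAt φ r) : GraphParamAt (PowerSeries.map ι φ) r := by
  obtain ⟨u, hu0, hu, hv, hunit⟩ := h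
  refine ⟨PowerSeries.map ι u, by rw [constantCoeff_map, hu0, map_zero],
    (normLE₁_map_iff ι hι).2 hu, ?_, ?_⟩ <;> rw [← map_comp]
  · exact (normLE₁_map_iff ι hι).2 hv
  · simpa [coeff_map, hι] using hunit

variable [IsUltrametricDist K']

lemma GraphParamAt.of_map (hφ0 : constantCoeff φ = 0) (hr : 0 < r)
    (h : GraphParamAt (PowerSeries.map ι φ) r) : GraphParamAt φ r := by
  have hφ0' : constantCoeff (PowerSeries.map ι φ) = 0 := by
    rw [constantCoeff_map, hφ0, map_zero]
  obtain ⟨u, hu0, hu, hv, hu1 | hv1⟩ := h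
  · refine ⟨X, constantCoeff_X, normLE₁_X hr.le, ?_, Or.inl (by simp)⟩
    rw [comp_eq_subst _ constantCoeff_X, X_subst]
    exact (normLE₁_map_iff ι hι).1 (hu.of_comp hr hu0 hu1 hv)
  have hφ1 : IsUnit (coeff 1 φ) := by
    rw [coeff_one_comp, coeff_map] at hv1
    exact isUnit_iff_ne_zero.2 fun h => by simp [h] at hv1
  set ψ := φ.substInvOfIsUnit hφ1
  have hψ0 : constantCoeff ψ = 0 := constantCoeff_substInvOfIsUnit _ _
  have hφψ : comp φ ψ = X := by
    rw [comp_eq_subst _ hψ0, subst_substInvOfIsUnit_right _ hφ0]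
  have hψφ : comp (PowerSeries.map ι ψ) (PowerSeries.map ι φ) = X := by
    rw [← map_comp, comp_eq_subst _ hφ0, subst_substInvOfIsUnit_left _ hφ0, map_X]
  have hv0 : constantCoeff (comp (PowerSeries.map ι φ) u) = 0 := by
    rw [comp_eq_subst _ hu0]
    exact constantCoeff_subst_eq_zero hu0 _ hφ0'
  have hψu : comp (PowerSeries.map ι ψ) (comp (PowerSeries.map ι φ) u) = u := by
    rw [comp_eq_subst _ hv0, comp_eq_subst _ hu0, ← subst_comp_subst_apply
      (.of_constantCoeff_zero' hφ0') (.of_constantCoeff_zero' hu0), ← comp_eq_subst _ hφ0',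
      hψφ, subst_X (.of_constantCoeff_zero' hu0)]
  have hψ : NormLE₁ r ψ r :=
    (normLE₁_map_iff ι hι).1 (NormLE₁.of_comp hr hv0 hv1 hv (by rwa [hψu]))
  exact ⟨ψ, hψ0, hψ, hφψ ▸ normLE₁_X hr.le, Or.inr (by simp [hφψ])⟩

lemma graphParamAt_map_iff (hφ0 : constantCoeff φ = 0) (hr : 0 < r) :
    GraphParamAt (PowerSeries.map ι φ) r ↔ GraphParamAt φ r :=
  ⟨GraphParamAt.of_map ι hι hφ0 hr, GraphParamAt.map ι hι⟩

end Transfer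

end NA

theorem size_graph_invariant_under_isometric_extension_general
    {K K' : Type*}
    [NontriviallyNormedField K] [IsUltrametricDist K]
    [NontriviallyNormedField K'] [IsUltrametricDist K']
    (ι : K →+* K') (hι : ∀ x : K, ‖ι x‖ = ‖x‖)
    (φ : PowerSeries K) (hφ0 : PowerSeries.constantCoeff φ = 0) :
    sSup {r : ℝ | r ∈ Set.Ioc (0 : ℝ) 1 ∧ NA.GraphTrivAt φ r}
      = sSup {r : ℝ | r ∈ Set.Ioc (0 : ℝ) 1 ∧ NA.GraphTrivAt (PowerSeries.map ι φ) r} := by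
  have hφ0' : PowerSeries.constantCoeff (PowerSeries.map ι φ) = 0 := by
    rw [NA.constantCoeff_map, hφ0, map_zero]
  congr 1
  ext r
  refine and_congr_right fun hr => ?_
  rw [NA.graphTrivAt_iff_graphParamAt hφ0 hr.1, NA.graphTrivAt_iff_graphParamAt hφ0' hr.1,
    NA.graphParamAt_map_iff ι hι hφ0 hr.1]

/-- **Invariance of the size under isometric extension of complete discretely valued fields**
(graph case of Proposition 3.4 of Bost–Chambert-Loir): let `ι : K → K'` be an isometric
embedding of complete nonarchimedean fields whose valuation rings are discrete valuation
rings. For a formal power series `φ ∈ K⟦X⟧` with zero constant term, the supremum of the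
radii `r ∈ (0,1]` at which the graph of `φ` is analytically trivialized over `K` equals the
supremum of the radii at which the graph of `ι(φ) ∈ K'⟦X⟧` is analytically trivialized over
`K'`. -/
theorem size_graph_invariant_under_isometric_extension
    {K K' : Type*}
    [NontriviallyNormedField K] [CompleteSpace K] [IsUltrametricDist K]
    [IsDiscreteValuationRing (NA.integers K)]
    [NontriviallyNormedField K'] [CompleteSpace K'] [IsUltrametricDist K']
    [IsDiscreteValuationRing (NA.integers K')]
    (ι : K →+* K') (hι : ∀ x : K, ‖ι x‖ = ‖x‖)
    (φ : PowerSeries K) (hφ0 : PowerSeries.constantCoeff φ = 0) :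
    sSup {r : ℝ | r ∈ Set.Ioc (0 : ℝ) 1 ∧ NA.GraphTrivAt φ r}
      = sSup {r : ℝ | r ∈ Set.Ioc (0 : ℝ) 1 ∧ NA.GraphTrivAt (PowerSeries.map ι φ) r} :=
  size_graph_invariant_under_isometric_extension_general ι hι φ hφ0
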